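/- arXiv:1906.10949 — 3 statements merged into one kernel-verified Lean document; each statement's English description precedes it below -/
import Mathlib

section
/- Let 0 < τ ≤ t, and let (X_k)_{k≥1} and (Y_k)_{k≥1} be ℕ-valued random variables, all mutually independent, with X_k Poisson-distributed with parameter p_k τ and Y_k Poisson-distributed with parameter p_k (t − τ). Set M_τ = Σ_{k≥1} τ p_k · 1{X_k = 0}, M_t = Σ_{k≥1} t p_k · 1{X_k + Y_k = 0}, U_τ = Σ_{k≥1} 1{X_k is odd}, U_t = Σ_{k≥1} 1{X_k + Y_k is odd} (all series converge a.s. and define square-integrable random variables). Then Cov(M_τ, U_t) = (1/2) Σ_{k≥1} τ p_k ( e^{−p_k (2t + τ)} − e^{−p_k (2t − τ)} ) and Cov(M_t, U_τ) = (1/2) Σ_{k≥1} t p_k ( e^{−p_k (2τ + t)} − e^{−p_k t} ). -/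
/-!
Write `M = ∑ₖ cₖ 1_{Aₖ}` and `U = ∑ₖ 1_{Bₖ}`, where `Aₖ` and `Bₖ` are events of the `k`-th
block `(Xₖ, Yₖ)`. Since `M` is bounded, covariance passes through the series in `M`, and
`Cov(1_{Aₖ}, U) = Cov(1_{Aₖ}, 1_{Bₖ})` because `U - 1_{Bₖ}` is a.s. a function of the other
blocks. The one-block covariances are explicit: for a Poisson variable `X` of parameter `r`,
`1 - 2 P(X odd) = E[(-1)^X] = e^{-2r}`, and `E[(-1)^X]` is multiplicative over independent
summands, so `Xₖ + Yₖ` has the parity law of a Poisson variable of parameter `pₖ t`.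
`U` is square integrable because the `Bₖ` are pairwise independent and `∑ₖ P(Bₖ) < ∞`
(a Poisson variable of parameter `r` is odd with probability at most `r`).
-/

open Filter Real MeasureTheory ProbabilityTheory
open scoped ENNReal

section BoundedSeries

variable {Ω : Type*} {mΩ : MeasurableSpace Ω} {P : Measure Ω} {f : ℕ → Ω → ℝ} {c : ℕ → ℝ}

lemma aestronglyMeasurable_tsum (hf : ∀ k, AEStronglyMeasurable (f k) P) :
    AEStronglyMeasurable (fun ω => ∑' k, f k ω) P :=
  (AEMeasurable.tsum fun k => (hf k).aemeasurable).aestronglyMeasurable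

lemma abs_tsum_le_of_abs_le (hc : Summable c) (hfc : ∀ k ω, |f k ω| ≤ c k) (ω : Ω) :
    |∑' k, f k ω| ≤ ∑' k, c k := by
  simpa only [Real.norm_eq_abs] using tsum_of_norm_bounded (f := (f · ω)) hc.hasSum (hfc · ω)

lemma memLp_tsum_of_abs_le [IsFiniteMeasure P] (q : ℝ≥0∞)
    (hf : ∀ k, AEStronglyMeasurable (f k) P) (hc : Summable c) (hfc : ∀ k ω, |f k ω| ≤ c k) :
    MemLp (fun ω => ∑' k, f k ω) q P :=
  .of_bound (aestronglyMeasurable_tsum hf) _ (.of_forall (abs_tsum_le_of_abs_le hc hfc))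

lemma hasSum_integral_mul_of_abs_le {Y : Ω → ℝ} (hf : ∀ k, AEStronglyMeasurable (f k) P)
    (hc : Summable c) (hfc : ∀ k ω, |f k ω| ≤ c k) (hY : Integrable Y P) :
    HasSum (fun k => ∫ ω, f k ω * Y ω ∂P) (∫ ω, (∑' k, f k ω) * Y ω ∂P) := by
  have hint : ∀ k, Integrable (fun ω => f k ω * Y ω) P := fun k =>
    hY.bdd_mul (hf k) (.of_forall fun ω => hfc k ω)
  have hnorm : ∀ k, ∫ ω, ‖f k ω * Y ω‖ ∂P ≤ c k * ∫ ω, ‖Y ω‖ ∂P := fun k => by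
    rw [← integral_const_mul]
    refine integral_mono (hint k).norm (hY.norm.const_mul _) fun ω => ?_
    rw [norm_mul]
    exact mul_le_mul_of_nonneg_right (hfc k ω) (norm_nonneg _)
  simp_rw [← tsum_mul_right]
  exact hasSum_integral_of_summable_integral_norm hint
    ((hc.mul_right _).of_nonneg_of_le (fun k => integral_nonneg fun _ => norm_nonneg _) hnorm)

lemma covariance_tsum_left [IsProbabilityMeasure P] {Y : Ω → ℝ}
    (hf : ∀ k, AEStronglyMeasurable (f k) P) (hc : Summable c) (hfc : ∀ k ω, |f k ω| ≤ c k)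
    (hY : MemLp Y 2 P) :
    cov[fun ω => ∑' k, f k ω, Y; P] = ∑' k, cov[f k, Y; P] := by
  have hfLp : ∀ k, MemLp (f k) 2 P := fun k =>
    .of_bound (hf k) (c k) (.of_forall fun ω => hfc k ω)
  have hmean := hasSum_integral_mul_of_abs_le hf hc hfc (integrable_const (1 : ℝ))
  have hprod := hasSum_integral_mul_of_abs_le hf hc hfc (hY.integrable one_le_two)
  simp only [mul_one] at hmean
  rw [covariance_eq_sub (memLp_tsum_of_abs_le 2 hf hc hfc) hY]
  simp_rw [covariance_eq_sub (hfLp _) hY]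
  exact (hprod.sub (hmean.mul_right _)).tsum_eq.symm

lemma abs_mul_indicator_one_le (a : ℝ) (s : Set Ω) (ω : Ω) :
    |a * s.indicator (1 : Ω → ℝ) ω| ≤ |a| := by
  by_cases hω : ω ∈ s <;> simp [hω]

lemma memLp_tsum_mul_indicator [IsFiniteMeasure P] (q : ℝ≥0∞) {A : ℕ → Set Ω}
    (hA : ∀ k, MeasurableSet (A k)) (hc : Summable c) :
    MemLp (fun ω => ∑' k, c k * (A k).indicator (1 : Ω → ℝ) ω) q P :=
  memLp_tsum_of_abs_le q
    (fun k => ((measurable_const.indicator (hA k)).const_mul _).aestronglyMeasurable) hc.abs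
    fun k => abs_mul_indicator_one_le (c k) (A k)

end BoundedSeries

section CountingSeries

variable {Ω : Type*} {mΩ : MeasurableSpace Ω} {P : Measure Ω} {B : ℕ → Set Ω}

lemma ae_summable_indicator_of_tsum_ne_top (hB : ∑' k, P (B k) ≠ ∞) :
    ∀ᵐ ω ∂P, Summable fun k => (B k).indicator (1 : Ω → ℝ) ω := by
  filter_upwards [ae_eventually_notMem hB] with ω hω
  obtain ⟨N, hN⟩ := eventually_atTop.1 hω
  refine summable_of_ne_finset_zero (s := Finset.range N) fun k hk => ?_
  exact Set.indicator_of_notMem (hN k (by simpa using hk)) _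

lemma tsum_ne_top_of_measureReal_le [IsFiniteMeasure P] {a : ℕ → ℝ} (ha : Summable a)
    (hB : ∀ k, P.real (B k) ≤ a k) : ∑' k, P (B k) ≠ ∞ := by
  refine ne_top_of_le_ne_top (ENNReal.tsum_coe_ne_top_iff_summable.2 ha.toNNReal)
    (ENNReal.tsum_le_tsum fun k => ?_)
  rw [← ofReal_measureReal]
  exact ENNReal.ofReal_le_ofReal (hB k)

lemma lintegral_tsum_indicator_sq_le (hB : ∀ k, MeasurableSet (B k))
    (hB_indep : Pairwise fun j k => IndepSet (B j) (B k) P) :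
    ∫⁻ ω, (∑' k, (B k).indicator 1 ω) ^ 2 ∂P ≤ ∑' k, P (B k) + (∑' k, P (B k)) ^ 2 := by
  have hmeas : ∀ j k, Measurable ((B j ∩ B k).indicator (1 : Ω → ℝ≥0∞)) := fun j k =>
    measurable_const.indicator ((hB j).inter (hB k))
  have hsq : ∀ ω, (∑' k, (B k).indicator (1 : Ω → ℝ≥0∞) ω) ^ 2
      = ∑' j, ∑' k, (B j ∩ B k).indicator 1 ω := fun ω => by
    simp_rw [sq, ← ENNReal.tsum_mul_right, ← ENNReal.tsum_mul_left, Set.inter_indicator_one]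
    rfl
  have hinter : ∀ j k, P (B j ∩ B k) ≤ (if k = j then P (B j) else 0) + P (B j) * P (B k) := by
    intro j k
    by_cases hkj : k = j
    · simp [hkj]
    · simp [hkj, (hB_indep (Ne.symm hkj)).measure_inter_eq_mul]
  calc ∫⁻ ω, (∑' k, (B k).indicator 1 ω) ^ 2 ∂P
      = ∑' j, ∑' k, P (B j ∩ B k) := by
        simp_rw [hsq]
        rw [lintegral_tsum fun j => (Measurable.tsum (hmeas j)).aemeasurable]
        refine tsum_congr fun j => ?_
        rw [lintegral_tsum fun k => (hmeas j k).aemeasurable]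
        exact tsum_congr fun k => lintegral_indicator_one ((hB j).inter (hB k))
    _ ≤ ∑' j, ∑' k, ((if k = j then P (B j) else 0) + P (B j) * P (B k)) :=
        ENNReal.tsum_le_tsum fun j => ENNReal.tsum_le_tsum fun k => hinter j k
    _ = ∑' k, P (B k) + (∑' k, P (B k)) ^ 2 := by
        simp_rw [ENNReal.tsum_add, tsum_ite_eq, ENNReal.tsum_mul_left, ENNReal.tsum_mul_right, sq]

lemma memLp_two_tsum_indicator (hB : ∀ k, MeasurableSet (B k))
    (hB_indep : Pairwise fun j k => IndepSet (B j) (B k) P) (hB_sum : ∑' k, P (B k) ≠ ∞) :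
    MemLp (fun ω => ∑' k, (B k).indicator (1 : Ω → ℝ) ω) 2 P := by
  have hmeas : AEStronglyMeasurable (fun ω => ∑' k, (B k).indicator (1 : Ω → ℝ) ω) P :=
    (Measurable.tsum fun k => measurable_const.indicator (hB k)).aestronglyMeasurable
  refine (memLp_two_iff_integrable_sq hmeas).2 ⟨hmeas.pow 2, ?_⟩
  refine lt_of_le_of_lt (lintegral_mono fun ω => ?_)
    ((lintegral_tsum_indicator_sq_le hB hB_indep).trans_lt ?_)
  · rw [enorm_pow]
    refine pow_le_pow_left' (enorm_tsum_le_tsum_enorm.trans (ENNReal.tsum_le_tsum fun k => ?_)) 2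
    by_cases hk : ω ∈ B k <;> simp [hk]
  · exact ENNReal.add_lt_top.2 ⟨hB_sum.lt_top, ENNReal.pow_lt_top hB_sum.lt_top⟩

variable {m : ℕ → MeasurableSpace Ω}

lemma pairwise_indepSet_of_indep_iSup_ne (hindep : ∀ k, Indep (m k) (⨆ j ≠ k, m j) P)
    (hB : ∀ k, MeasurableSet[m k] (B k)) :
    Pairwise fun i j => IndepSet (B i) (B j) P := fun i j hij =>
  (indep_of_indep_of_le_right (hindep i) (le_iSup₂ (f := fun j (_ : j ≠ i) => m j) j hij.symm)
    ).indepSet_of_measurableSet (hB i) (hB j)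

lemma memLp_two_tsum_indicator_of_indep_iSup_ne (hm : ∀ k, m k ≤ mΩ)
    (hindep : ∀ k, Indep (m k) (⨆ j ≠ k, m j) P) (hB : ∀ k, MeasurableSet[m k] (B k))
    (hB_sum : ∑' k, P (B k) ≠ ∞) :
    MemLp (fun ω => ∑' k, (B k).indicator (1 : Ω → ℝ) ω) 2 P :=
  memLp_two_tsum_indicator (fun k => hm k _ (hB k)) (pairwise_indepSet_of_indep_iSup_ne hindep hB)
    hB_sum

end CountingSeries

lemma ProbabilityTheory.iIndepFun.indep_comap_prodMk_iSup_ne {Ω ι β : Type*}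
    {mΩ : MeasurableSpace Ω} {P : Measure Ω} [MeasurableSpace β] {X Y : ι → Ω → β}
    (h : iIndepFun (Sum.elim X Y) P) (hX : ∀ i, Measurable (X i)) (hY : ∀ i, Measurable (Y i))
    (k : ι) :
    Indep (MeasurableSpace.comap (fun ω => (X k ω, Y k ω)) inferInstance)
      (⨆ j ≠ k, MeasurableSpace.comap (fun ω => (X j ω, Y j ω)) inferInstance) P := by
  set c : ι ⊕ ι → MeasurableSpace Ω := fun i => MeasurableSpace.comap (Sum.elim X Y i) inferInstance
  set S : Set (ι ⊕ ι) := {Sum.inl k, Sum.inr k}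
  have hc : ∀ i, c i ≤ mΩ := by rintro (i | i); exacts [(hX i).comap_le, (hY i).comap_le]
  have hle : ∀ j (T : Set (ι ⊕ ι)), Sum.inl j ∈ T → Sum.inr j ∈ T →
      MeasurableSpace.comap (fun ω => (X j ω, Y j ω)) inferInstance ≤ ⨆ i ∈ T, c i :=
    fun j T hl hr => (MeasurableSpace.comap_prodMk _ _).le.trans
      (sup_le (le_iSup₂ (f := fun i (_ : i ∈ T) => c i) _ hl)
        (le_iSup₂ (f := fun i (_ : i ∈ T) => c i) _ hr))
  refine indep_of_indep_of_le_right (indep_of_indep_of_le_left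
    (indep_iSup_of_disjoint hc h.iIndep (disjoint_compl_right (a := S))) (hle k S (by simp [S])
      (by simp [S]))) (iSup₂_le fun j hj => hle j Sᶜ (by simp [S, hj]) (by simp [S, hj]))

section Covariance

variable {Ω : Type*} {mΩ : MeasurableSpace Ω} {P : Measure Ω} [IsProbabilityMeasure P]

lemma covariance_indicator_one {A B : Set Ω} (hA : MeasurableSet A) (hB : MeasurableSet B) :
    cov[A.indicator 1, B.indicator 1; P] = P.real (A ∩ B) - P.real A * P.real B := by
  have hLp : ∀ {s : Set Ω}, MeasurableSet s → MemLp (s.indicator (1 : Ω → ℝ)) 2 P :=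
    fun hs => (memLp_const 1).indicator hs
  rw [covariance_eq_sub (hLp hA) (hLp hB), ← Set.inter_indicator_one,
    integral_indicator_one (hA.inter hB), integral_indicator_one hA, integral_indicator_one hB]

variable {m : ℕ → MeasurableSpace Ω} {A B : ℕ → Set Ω}

lemma covariance_indicator_tsum_indicator (hm : ∀ k, m k ≤ mΩ)
    (hindep : ∀ k, Indep (m k) (⨆ j ≠ k, m j) P) (hA : ∀ k, MeasurableSet[m k] (A k))
    (hB : ∀ k, MeasurableSet[m k] (B k)) (hB_sum : ∑' k, P (B k) ≠ ∞) (k : ℕ) :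
    cov[(A k).indicator 1, fun ω => ∑' j, (B j).indicator (1 : Ω → ℝ) ω; P]
      = cov[(A k).indicator 1, (B k).indicator 1; P] := by
  set U : Ω → ℝ := fun ω => ∑' j, (B j).indicator 1 ω
  set W : Ω → ℝ := fun ω => ∑' j, if j = k then 0 else (B j).indicator 1 ω
  have hU : MemLp U 2 P := memLp_two_tsum_indicator_of_indep_iSup_ne hm hindep hB hB_sum
  have hUW : U - (B k).indicator 1 =ᵐ[P] W := by
    filter_upwards [ae_summable_indicator_of_tsum_ne_top hB_sum] with ω hω
    simp only [Pi.sub_apply, U, W, hω.tsum_eq_add_tsum_ite k, add_sub_cancel_left]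
  have hW : Measurable[⨆ j ≠ k, m j] W := by
    refine @Measurable.tsum _ _ _ (⨆ j ≠ k, m j) _ _ _ _ _ _ _ _ _ _ _ _ fun j => ?_
    by_cases hjk : j = k
    · simp only [hjk, if_true]
      exact measurable_const
    · simp only [hjk, if_false]
      exact measurable_const.indicator (le_iSup₂ (f := fun j (_ : j ≠ k) => m j) j hjk _ (hB j))
  have hAW : IndepFun ((A k).indicator (1 : Ω → ℝ)) (U - (B k).indicator 1) P := by
    refine IndepFun.congr ?_ .rfl hUW.symm
    rw [IndepFun_iff_Indep]
    exact indep_of_indep_of_le_right (indep_of_indep_of_le_left (hindep k)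
      (measurable_iff_comap_le.1 (measurable_const.indicator (hA k))))
      (measurable_iff_comap_le.1 hW)
  have hALp : MemLp ((A k).indicator (1 : Ω → ℝ)) 2 P := (memLp_const 1).indicator (hm k _ (hA k))
  have hBLp : MemLp ((B k).indicator (1 : Ω → ℝ)) 2 P := (memLp_const 1).indicator (hm k _ (hB k))
  calc cov[(A k).indicator 1, U; P]
      = cov[(A k).indicator 1, (B k).indicator 1 + (U - (B k).indicator 1); P] := by
        rw [add_sub_cancel]
    _ = cov[(A k).indicator 1, (B k).indicator 1; P] := by
        rw [covariance_add_right hALp hBLp (hU.sub hBLp),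
          hAW.covariance_eq_zero hALp (hU.sub hBLp), add_zero]

theorem covariance_tsum_mul_indicator_tsum_indicator (hm : ∀ k, m k ≤ mΩ)
    (hindep : ∀ k, Indep (m k) (⨆ j ≠ k, m j) P) (hA : ∀ k, MeasurableSet[m k] (A k))
    (hB : ∀ k, MeasurableSet[m k] (B k)) (hB_sum : ∑' k, P (B k) ≠ ∞) {c : ℕ → ℝ}
    (hc : Summable c) :
    cov[fun ω => ∑' k, c k * (A k).indicator 1 ω, fun ω => ∑' k, (B k).indicator (1 : Ω → ℝ) ω; P]
      = ∑' k, c k * cov[(A k).indicator 1, (B k).indicator 1; P] := by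
  rw [covariance_tsum_left (f := fun k ω => c k * (A k).indicator 1 ω)
    (fun k => ((measurable_const.indicator (hm k _ (hA k))).const_mul _).aestronglyMeasurable)
    hc.abs (fun k => abs_mul_indicator_one_le (c k) (A k))
    (memLp_two_tsum_indicator_of_indep_iSup_ne hm hindep hB hB_sum)]
  refine tsum_congr fun k => ?_
  rw [covariance_const_mul_left, covariance_indicator_tsum_indicator hm hindep hA hB hB_sum k]

end Covariance

lemma one_sub_exp_neg_two_mul_div_two_le (x : ℝ) : (1 - exp (-(2 * x))) / 2 ≤ x := by
  linarith [add_one_le_exp (-(2 * x))]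

section Parity

variable {Ω : Type*} {mΩ : MeasurableSpace Ω} {P : Measure Ω} {X Y : Ω → ℕ}

lemma measureReal_odd_of_poisson [IsFiniteMeasure P] (hX : Measurable X) {r : ℝ}
    (hXr : ∀ j : ℕ, P.real {ω | X ω = j} = exp (-r) * r ^ j / j.factorial) :
    P.real {ω | Odd (X ω)} = (1 - exp (-(2 * r))) / 2 := by
  have hunion : {ω | Odd (X ω)} = ⋃ n : ℕ, {ω | X ω = 2 * n + 1} := by
    ext ω
    simp [Odd]
  have hdisj : Pairwise (Function.onFun Disjoint fun n : ℕ => {ω | X ω = 2 * n + 1}) :=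
    fun i j hij => Set.disjoint_left.2 fun ω hi hj => hij (by simp_all)
  have hsum : HasSum (fun n : ℕ => P.real {ω | X ω = 2 * n + 1}) (exp (-r) * sinh r) := by
    simp_rw [hXr, mul_div_assoc]
    exact (hasSum_sinh r).mul_left _
  rw [hunion, measureReal_def,
    measure_iUnion hdisj fun n => hX (measurableSet_singleton (2 * n + 1)),
    ENNReal.tsum_toReal_eq fun _ => measure_ne_top _ _]
  change ∑' n, P.real _ = _
  rw [hsum.tsum_eq, sinh_eq]
  have h1 : exp (-r) * exp r = 1 := by rw [← exp_add, neg_add_cancel, exp_zero]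
  have h2 : exp (-r) * exp (-r) = exp (-(2 * r)) := by rw [← exp_add]; ring_nf
  linear_combination h1 / 2 - h2 / 2

lemma measureReal_odd_le_of_poisson [IsFiniteMeasure P] (hX : Measurable X) {r : ℝ}
    (hXr : ∀ j : ℕ, P.real {ω | X ω = j} = exp (-r) * r ^ j / j.factorial) :
    P.real {ω | Odd (X ω)} ≤ r :=
  (measureReal_odd_of_poisson hX hXr).trans_le (one_sub_exp_neg_two_mul_div_two_le r)

lemma ProbabilityTheory.IndepFun.measureReal_inter_preimage_eq_mul (h : IndepFun X Y P)
    {s t : Set ℕ} (hs : MeasurableSet s) (ht : MeasurableSet t) :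
    P.real (X ⁻¹' s ∩ Y ⁻¹' t) = P.real (X ⁻¹' s) * P.real (Y ⁻¹' t) := by
  simp [measureReal_def, h.measure_inter_preimage_eq_mul s t hs ht]

lemma ProbabilityTheory.IndepFun.measureReal_eq_zero_inter_odd_add (h : IndepFun X Y P) :
    P.real ({ω | X ω = 0} ∩ {ω | Odd (X ω + Y ω)})
      = P.real {ω | X ω = 0} * P.real {ω | Odd (Y ω)} := by
  have hset : {ω | X ω = 0} ∩ {ω | Odd (X ω + Y ω)} = X ⁻¹' {0} ∩ Y ⁻¹' {n | Odd n} := by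
    ext ω
    simp only [Set.mem_inter_iff, Set.mem_ofPred_eq, Set.mem_preimage, Set.mem_singleton_iff]
    constructor <;> rintro ⟨h0, hodd⟩ <;> simp_all
  rw [hset, h.measureReal_inter_preimage_eq_mul (measurableSet_singleton 0) .of_discrete]
  rfl

lemma ProbabilityTheory.IndepFun.measureReal_add_eq_zero (h : IndepFun X Y P) :
    P.real {ω | X ω + Y ω = 0} = P.real {ω | X ω = 0} * P.real {ω | Y ω = 0} := by
  have hset : {ω | X ω + Y ω = 0} = X ⁻¹' {0} ∩ Y ⁻¹' {0} := by
    ext ω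
    simp
  rw [hset, h.measureReal_inter_preimage_eq_mul (measurableSet_singleton 0)
    (measurableSet_singleton 0)]
  rfl

lemma ProbabilityTheory.IndepFun.one_sub_two_mul_measureReal_odd_add [IsProbabilityMeasure P]
    (hX : Measurable X) (hY : Measurable Y) (h : IndepFun X Y P) :
    1 - 2 * P.real {ω | Odd (X ω + Y ω)}
      = (1 - 2 * P.real {ω | Odd (X ω)}) * (1 - 2 * P.real {ω | Odd (Y ω)}) := by
  set O : Set ℕ := {n | Odd n}
  have hO : MeasurableSet O := .of_discrete
  have hsplit : {ω | Odd (X ω + Y ω)} = (X ⁻¹' O ∩ Y ⁻¹' Oᶜ) ∪ (X ⁻¹' Oᶜ ∩ Y ⁻¹' O) := by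
    ext ω
    simp only [Set.mem_ofPred_eq, Set.mem_union, Set.mem_inter_iff, Set.mem_preimage,
      Set.mem_compl_iff, O, ← Nat.not_even_iff_odd, Nat.even_add]
    tauto
  have hdisj : Disjoint (X ⁻¹' O ∩ Y ⁻¹' Oᶜ) (X ⁻¹' Oᶜ ∩ Y ⁻¹' O) :=
    Set.disjoint_left.2 fun ω h1 h2 => h2.1 h1.1
  rw [hsplit, measureReal_union hdisj ((hX hO.compl).inter (hY hO)),
    h.measureReal_inter_preimage_eq_mul hO hO.compl,
    h.measureReal_inter_preimage_eq_mul hO.compl hO, Set.preimage_compl, Set.preimage_compl,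
    measureReal_compl (hX hO), measureReal_compl (hY hO), probReal_univ]
  change 1 - 2 * _ = (1 - 2 * P.real (X ⁻¹' O)) * (1 - 2 * P.real (Y ⁻¹' O))
  ring

variable [IsProbabilityMeasure P] {r s : ℝ}

lemma ProbabilityTheory.IndepFun.measureReal_odd_add_of_poisson
    (hX : Measurable X) (hY : Measurable Y) (h : IndepFun X Y P)
    (hXr : ∀ j : ℕ, P.real {ω | X ω = j} = exp (-r) * r ^ j / j.factorial)
    (hYs : ∀ j : ℕ, P.real {ω | Y ω = j} = exp (-s) * s ^ j / j.factorial) :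
    P.real {ω | Odd (X ω + Y ω)} = (1 - exp (-(2 * (r + s)))) / 2 := by
  have hparity := h.one_sub_two_mul_measureReal_odd_add hX hY
  rw [measureReal_odd_of_poisson hX hXr, measureReal_odd_of_poisson hY hYs] at hparity
  rw [mul_add, neg_add, exp_add]
  linear_combination (-1 / 2 : ℝ) * hparity

lemma ProbabilityTheory.IndepFun.measureReal_odd_add_le_of_poisson
    (hX : Measurable X) (hY : Measurable Y) (h : IndepFun X Y P)
    (hXr : ∀ j : ℕ, P.real {ω | X ω = j} = exp (-r) * r ^ j / j.factorial)
    (hYs : ∀ j : ℕ, P.real {ω | Y ω = j} = exp (-s) * s ^ j / j.factorial) :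
    P.real {ω | Odd (X ω + Y ω)} ≤ r + s :=
  (h.measureReal_odd_add_of_poisson hX hY hXr hYs).trans_le
    (one_sub_exp_neg_two_mul_div_two_le _)

lemma ProbabilityTheory.IndepFun.covariance_indicator_eq_zero_odd_add_of_poisson
    (hX : Measurable X) (hY : Measurable Y) (h : IndepFun X Y P)
    (hXr : ∀ j : ℕ, P.real {ω | X ω = j} = exp (-r) * r ^ j / j.factorial)
    (hYs : ∀ j : ℕ, P.real {ω | Y ω = j} = exp (-s) * s ^ j / j.factorial) :
    cov[{ω | X ω = 0}.indicator 1, {ω | Odd (X ω + Y ω)}.indicator 1; P]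
      = (exp (-(3 * r + 2 * s)) - exp (-(r + 2 * s))) / 2 := by
  have hA : MeasurableSet {ω | X ω = 0} := hX (measurableSet_singleton 0)
  have hB : MeasurableSet {ω | Odd (X ω + Y ω)} := (hX.add hY) (.of_discrete (s := {n | Odd n}))
  have hX0 : P.real {ω | X ω = 0} = exp (-r) := by simpa using hXr 0
  rw [covariance_indicator_one hA hB, h.measureReal_eq_zero_inter_odd_add, hX0,
    measureReal_odd_of_poisson hY hYs, h.measureReal_odd_add_of_poisson hX hY hXr hYs]
  have e1 : exp (-r) * exp (-(2 * s)) = exp (-(r + 2 * s)) := by rw [← exp_add]; ring_nf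
  have e2 : exp (-r) * exp (-(2 * (r + s))) = exp (-(3 * r + 2 * s)) := by
    rw [← exp_add]; ring_nf
  linear_combination (e2 - e1) / 2

lemma ProbabilityTheory.IndepFun.covariance_indicator_add_eq_zero_odd_of_poisson
    (hX : Measurable X) (hY : Measurable Y) (h : IndepFun X Y P)
    (hXr : ∀ j : ℕ, P.real {ω | X ω = j} = exp (-r) * r ^ j / j.factorial)
    (hYs : ∀ j : ℕ, P.real {ω | Y ω = j} = exp (-s) * s ^ j / j.factorial) :
    cov[{ω | X ω + Y ω = 0}.indicator 1, {ω | Odd (X ω)}.indicator 1; P]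
      = (exp (-(3 * r + s)) - exp (-(r + s))) / 2 := by
  have hA : MeasurableSet {ω | X ω + Y ω = 0} := (hX.add hY) (measurableSet_singleton 0)
  have hB : MeasurableSet {ω | Odd (X ω)} := hX (.of_discrete (s := {n | Odd n}))
  have hX0 : P.real {ω | X ω = 0} = exp (-r) := by simpa using hXr 0
  have hY0 : P.real {ω | Y ω = 0} = exp (-s) := by simpa using hYs 0
  have hempty : {ω | X ω + Y ω = 0} ∩ {ω | Odd (X ω)} = ∅ := by
    ext ω
    simp only [Set.mem_inter_iff, Set.mem_ofPred_eq, Set.mem_empty_iff_false, iff_false]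
    rintro ⟨h0, hodd⟩
    simp_all [Nat.add_eq_zero_iff]
  rw [covariance_indicator_one hA hB, hempty, measureReal_empty, h.measureReal_add_eq_zero, hX0,
    hY0, measureReal_odd_of_poisson hX hXr]
  have e1 : exp (-r) * exp (-s) = exp (-(r + s)) := by rw [← exp_add]; ring_nf
  have e2 : exp (-(r + s)) * exp (-(2 * r)) = exp (-(3 * r + s)) := by rw [← exp_add]; ring_nf
  linear_combination e2 / 2 - (1 - exp (-(2 * r))) / 2 * e1

end Parity

theorem covariance_missing_mass_odd_occupancy_general
    {Ω : Type*} [MeasurableSpace Ω] (P : Measure Ω) [IsProbabilityMeasure P]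
    (p : ℕ → ℝ) (hp_sum : ∑' k, p k = 1)
    (τ t : ℝ)
    (X Y : ℕ → Ω → ℕ) (hX_meas : ∀ k, Measurable (X k)) (hY_meas : ∀ k, Measurable (Y k))
    (h_indep : iIndepFun (Sum.elim X Y) P)
    (hX : ∀ k, ∀ j : ℕ, (P {ω | X k ω = j}).toReal
      = Real.exp (-(p k * τ)) * (p k * τ) ^ j / j.factorial)
    (hY : ∀ k, ∀ j : ℕ, (P {ω | Y k ω = j}).toReal
      = Real.exp (-(p k * (t - τ))) * (p k * (t - τ)) ^ j / j.factorial)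
    (Mτ Mt Uτ Ut : Ω → ℝ)
    (hMτ : ∀ ω, Mτ ω = ∑' k, τ * p k * (if X k ω = 0 then (1 : ℝ) else 0))
    (hMt : ∀ ω, Mt ω = ∑' k, t * p k * (if X k ω + Y k ω = 0 then (1 : ℝ) else 0))
    (hUτ : ∀ ω, Uτ ω = ∑' k, if Odd (X k ω) then (1 : ℝ) else 0)
    (hUt : ∀ ω, Ut ω = ∑' k, if Odd (X k ω + Y k ω) then (1 : ℝ) else 0) :
    (∀ᵐ ω ∂P, Summable fun k => |τ * p k * (if X k ω = 0 then (1 : ℝ) else 0)|) ∧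
    (∀ᵐ ω ∂P, Summable fun k => |t * p k * (if X k ω + Y k ω = 0 then (1 : ℝ) else 0)|) ∧
    (∀ᵐ ω ∂P, Summable fun k => if Odd (X k ω) then (1 : ℝ) else 0) ∧
    (∀ᵐ ω ∂P, Summable fun k => if Odd (X k ω + Y k ω) then (1 : ℝ) else 0) ∧
    MemLp Mτ 2 P ∧ MemLp Mt 2 P ∧ MemLp Uτ 2 P ∧ MemLp Ut 2 P ∧
    (∫ ω, (Mτ ω - ∫ ω', Mτ ω' ∂P) * (Ut ω - ∫ ω', Ut ω' ∂P) ∂P)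
      = (1 / 2) * ∑' k, τ * p k * (Real.exp (-(p k * (2 * t + τ)))
          - Real.exp (-(p k * (2 * t - τ)))) ∧
    (∫ ω, (Mt ω - ∫ ω', Mt ω' ∂P) * (Uτ ω - ∫ ω', Uτ ω' ∂P) ∂P)
      = (1 / 2) * ∑' k, t * p k * (Real.exp (-(p k * (2 * τ + t)))
          - Real.exp (-(p k * t))) := by
  have hp : Summable p := by
    by_contra h
    simp [tsum_eq_zero_of_not_summable h] at hp_sum
  set m : ℕ → MeasurableSpace Ω := fun k =>
    MeasurableSpace.comap (fun ω => (X k ω, Y k ω)) inferInstance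
  have hm : ∀ k, m k ≤ ‹_› := fun k => ((hX_meas k).prodMk (hY_meas k)).comap_le
  have hindep := h_indep.indep_comap_prodMk_iSup_ne hX_meas hY_meas
  have hA₁ : ∀ k, MeasurableSet[m k] {ω | X k ω = 0} := fun k => ⟨{z | z.1 = 0}, .of_discrete, rfl⟩
  have hA₂ : ∀ k, MeasurableSet[m k] {ω | X k ω + Y k ω = 0} := fun k =>
    ⟨{z | z.1 + z.2 = 0}, .of_discrete, rfl⟩
  have hB₁ : ∀ k, MeasurableSet[m k] {ω | Odd (X k ω)} := fun k =>
    ⟨{z | Odd z.1}, .of_discrete, rfl⟩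
  have hB₂ : ∀ k, MeasurableSet[m k] {ω | Odd (X k ω + Y k ω)} := fun k =>
    ⟨{z | Odd (z.1 + z.2)}, .of_discrete, rfl⟩
  have hXY : ∀ k, IndepFun (X k) (Y k) P := fun k => h_indep.indepFun Sum.inl_ne_inr
  have hB₁_sum : ∑' k, P {ω | Odd (X k ω)} ≠ ∞ := tsum_ne_top_of_measureReal_le (hp.mul_right τ)
    fun k => measureReal_odd_le_of_poisson (hX_meas k) (hX k)
  have hB₂_sum : ∑' k, P {ω | Odd (X k ω + Y k ω)} ≠ ∞ :=
    tsum_ne_top_of_measureReal_le ((hp.mul_right τ).add (hp.mul_right (t - τ))) fun k =>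
      (hXY k).measureReal_odd_add_le_of_poisson (hX_meas k) (hY_meas k) (hX k) (hY k)
  obtain rfl : Mτ = fun ω => ∑' k, τ * p k * {ω | X k ω = 0}.indicator 1 ω :=
    funext fun ω => by simp [hMτ, Set.indicator_apply]
  obtain rfl : Mt = fun ω => ∑' k, t * p k * {ω | X k ω + Y k ω = 0}.indicator 1 ω :=
    funext fun ω => by simp [hMt, Set.indicator_apply]
  obtain rfl : Uτ = fun ω => ∑' k, {ω | Odd (X k ω)}.indicator 1 ω :=
    funext fun ω => by simp [hUτ, Set.indicator_apply]
  obtain rfl : Ut = fun ω => ∑' k, {ω | Odd (X k ω + Y k ω)}.indicator 1 ω :=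
    funext fun ω => by simp [hUt, Set.indicator_apply]
  refine ⟨.of_forall fun ω => ?_, .of_forall fun ω => ?_,
    by simpa [Set.indicator_apply] using ae_summable_indicator_of_tsum_ne_top hB₁_sum,
    by simpa [Set.indicator_apply] using ae_summable_indicator_of_tsum_ne_top hB₂_sum,
    memLp_tsum_mul_indicator 2 (fun k => hm k _ (hA₁ k)) (hp.mul_left τ),
    memLp_tsum_mul_indicator 2 (fun k => hm k _ (hA₂ k)) (hp.mul_left t),
    memLp_two_tsum_indicator_of_indep_iSup_ne hm hindep hB₁ hB₁_sum,
    memLp_two_tsum_indicator_of_indep_iSup_ne hm hindep hB₂ hB₂_sum, ?_, ?_⟩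
  · exact (hp.mul_left τ).abs.of_nonneg_of_le (fun _ => abs_nonneg _) fun k => by
      split_ifs <;> simp [-abs_mul]
  · exact (hp.mul_left t).abs.of_nonneg_of_le (fun _ => abs_nonneg _) fun k => by
      split_ifs <;> simp [-abs_mul]
  · change cov[_, _; P] = _
    rw [covariance_tsum_mul_indicator_tsum_indicator hm hindep hA₁ hB₂ hB₂_sum (hp.mul_left τ),
      ← tsum_mul_left]
    refine tsum_congr fun k => ?_
    rw [(hXY k).covariance_indicator_eq_zero_odd_add_of_poisson (hX_meas k) (hY_meas k) (hX k)
      (hY k)]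
    ring_nf
  · change cov[_, _; P] = _
    rw [covariance_tsum_mul_indicator_tsum_indicator hm hindep hA₂ hB₁ hB₁_sum (hp.mul_left t),
      ← tsum_mul_left]
    refine tsum_congr fun k => ?_
    rw [(hXY k).covariance_indicator_add_eq_zero_odd_of_poisson (hX_meas k) (hY_meas k) (hX k)
      (hY k)]
    ring_nf

/-- Cross-covariances of the Poissonized scaled missing mass and odd-occupancy processes
at times `τ ≤ t`: `Cov(M(τ), U(t)) = (1/2) ∑_k τ p_k (e^{−p_k(2t+τ)} − e^{−p_k(2t−τ)})`
and `Cov(M(t), U(τ)) = (1/2) ∑_k t p_k (e^{−p_k(2τ+t)} − e^{−p_k t})`. -/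
theorem covariance_missing_mass_odd_occupancy
    {Ω : Type*} [MeasurableSpace Ω] (P : Measure Ω) [IsProbabilityMeasure P]
    (p : ℕ → ℝ) (hp_pos : ∀ k, 0 < p k) (hp_sum : ∑' k, p k = 1)
    (τ t : ℝ) (hτ : 0 < τ) (hτt : τ ≤ t)
    (X Y : ℕ → Ω → ℕ) (hX_meas : ∀ k, Measurable (X k)) (hY_meas : ∀ k, Measurable (Y k))
    (h_indep : iIndepFun (Sum.elim X Y) P)
    (hX : ∀ k, ∀ j : ℕ, (P {ω | X k ω = j}).toReal
      = Real.exp (-(p k * τ)) * (p k * τ) ^ j / j.factorial)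
    (hY : ∀ k, ∀ j : ℕ, (P {ω | Y k ω = j}).toReal
      = Real.exp (-(p k * (t - τ))) * (p k * (t - τ)) ^ j / j.factorial)
    (Mτ Mt Uτ Ut : Ω → ℝ)
    (hMτ : ∀ ω, Mτ ω = ∑' k, τ * p k * (if X k ω = 0 then (1 : ℝ) else 0))
    (hMt : ∀ ω, Mt ω = ∑' k, t * p k * (if X k ω + Y k ω = 0 then (1 : ℝ) else 0))
    (hUτ : ∀ ω, Uτ ω = ∑' k, if Odd (X k ω) then (1 : ℝ) else 0)
    (hUt : ∀ ω, Ut ω = ∑' k, if Odd (X k ω + Y k ω) then (1 : ℝ) else 0) :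
    (∀ᵐ ω ∂P, Summable fun k => |τ * p k * (if X k ω = 0 then (1 : ℝ) else 0)|) ∧
    (∀ᵐ ω ∂P, Summable fun k => |t * p k * (if X k ω + Y k ω = 0 then (1 : ℝ) else 0)|) ∧
    (∀ᵐ ω ∂P, Summable fun k => if Odd (X k ω) then (1 : ℝ) else 0) ∧
    (∀ᵐ ω ∂P, Summable fun k => if Odd (X k ω + Y k ω) then (1 : ℝ) else 0) ∧
    MemLp Mτ 2 P ∧ MemLp Mt 2 P ∧ MemLp Uτ 2 P ∧ MemLp Ut 2 P ∧
    (∫ ω, (Mτ ω - ∫ ω', Mτ ω' ∂P) * (Ut ω - ∫ ω', Ut ω' ∂P) ∂P)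
      = (1 / 2) * ∑' k, τ * p k * (Real.exp (-(p k * (2 * t + τ)))
          - Real.exp (-(p k * (2 * t - τ)))) ∧
    (∫ ω, (Mt ω - ∫ ω', Mt ω' ∂P) * (Uτ ω - ∫ ω', Uτ ω' ∂P) ∂P)
      = (1 / 2) * ∑' k, t * p k * (Real.exp (-(p k * (2 * τ + t)))
          - Real.exp (-(p k * t))) :=
  covariance_missing_mass_odd_occupancy_general P p hp_sum τ t X Y hX_meas hY_meas h_indep hX hY Mτ
    Mt Uτ Ut hMτ hMt hUτ hUt
end

section
/- For all fixed reals 0 < τ ≤ t, lim_{n→∞} (1/α(n)) · (1/4) Σ_{k≥1} ( e^{−2 p_k n (t − τ)} − e^{−2 p_k n (t + τ)} ) = Γ(1 − θ) · 2^{θ−2} · ( (t + τ)^θ − (t − τ)^θ ), where Γ is the Gamma function. -/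
/-!
Writing `1 - e^{-c x p_k} = ∫_0^{x p_k} c e^{-cu} du` and summing over `k` gives
`∑_k (1 - e^{-c x p_k}) = ∫_0^∞ c e^{-cu} α(x/u) du`. As `α` is regularly varying with index `θ`,
`α(x/u)/α(x) → u^{-θ}`; Potter's bound `α(x/u)/α(x) ≤ 1 + 2^{θ'} u^{-θ'}` for `θ < θ' < 1`,
obtained by iterating the doubling inequality `α(2x) ≤ 2^{θ'} α(x)`, lets dominated convergence
identify the limit of `α(x)⁻¹ ∑_k (1 - e^{-c x p_k})` as `∫_0^∞ c e^{-cu} u^{-θ} du = c^θ Γ(1-θ)`.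
The covariance is a quarter of the difference of these sums at `c = 2(t+τ)` and `c = 2(t-τ)`.
-/

open Filter Topology Real

open MeasureTheory Set

/-- The paper's `α`. -/
noncomputable def countingFunction (p : ℕ → ℝ) (x : ℝ) : ℝ := ({i : ℕ | p i ≥ 1 / x}.ncard : ℝ)

def IsRegularlyVarying (f : ℝ → ℝ) (θ : ℝ) : Prop :=
  ∀ c > (0 : ℝ), Tendsto (fun x => f (c * x) / f x) atTop (𝓝 (c ^ θ))

namespace IsRegularlyVarying

variable {f : ℝ → ℝ} {θ : ℝ}

theorem of_eq_rpow_mul {L : ℝ → ℝ}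
    (hL : ∀ c > (0 : ℝ), Tendsto (fun x => L (c * x) / L x) atTop (𝓝 1))
    (hf : ∀ x > (0 : ℝ), f x = x ^ θ * L x) : IsRegularlyVarying f θ := by
  intro c hc
  have hL0 : ∀ᶠ x in atTop, L x ≠ 0 :=
    ((hL 1 one_pos).eventually_ne one_ne_zero).mono fun x hx h => hx (by simp [h])
  have heq : ∀ᶠ x in atTop, c ^ θ * (L (c * x) / L x) = f (c * x) / f x := by
    filter_upwards [hL0, eventually_gt_atTop 0] with x hLx hx
    have : 0 < x ^ θ := rpow_pos_of_pos hx θ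
    rw [hf x hx, hf (c * x) (by positivity), mul_rpow hc.le hx.le]
    field_simp
  simpa using ((hL c hc).const_mul (c ^ θ)).congr' heq

theorem eventually_ne_zero (hf : IsRegularlyVarying f θ) : ∀ᶠ x in atTop, f x ≠ 0 := by
  have h := hf 1 one_pos
  rw [one_rpow] at h
  exact (h.eventually_ne one_ne_zero).mono fun x hx h0 => hx (by simp [h0])

theorem eventually_le_rpow_mul (hf : IsRegularlyVarying f θ) (hf0 : ∀ᶠ x in atTop, 0 < f x)
    {c θ' : ℝ} (hc : 1 < c) (hθ' : θ < θ') : ∀ᶠ x in atTop, f (c * x) ≤ c ^ θ' * f x := by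
  filter_upwards [(hf c (by linarith)).eventually_lt_const (rpow_lt_rpow_of_exponent_lt hc hθ'),
    hf0] with x hx hfx
  exact ((div_lt_iff₀ hfx).mp hx).le

end IsRegularlyVarying

theorem le_rpow_mul_of_doubling {f : ℝ → ℝ} {X θ : ℝ} (hθ : 0 ≤ θ) (hX : 0 < X)
    (hf : MonotoneOn f (Ici X)) (hf0 : ∀ x ≥ X, 0 ≤ f x)
    (hD : ∀ x ≥ X, f (2 * x) ≤ 2 ^ θ * f x) {x y : ℝ} (hx : X ≤ x) (hxy : x ≤ y) :
    f y ≤ 2 ^ θ * (y / x) ^ θ * f x := by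
  obtain ⟨m, hm⟩ := pow_unbounded_of_one_lt (y / x) one_lt_two
  induction m generalizing x with
  | zero =>
    have hx0 : 0 < x := hX.trans_le hx
    rw [pow_zero, div_lt_one hx0] at hm
    exact absurd hxy hm.not_ge
  | succ m ih =>
    have hx0 : 0 < x := hX.trans_le hx
    have h2x : X ≤ 2 * x := by linarith
    have hyx : 1 ≤ (y / x) ^ θ := one_le_rpow ((one_le_div hx0).mpr hxy) hθ
    have hfx := hf0 x hx
    rcases le_or_gt y (2 * x) with hy | hy
    · calc f y ≤ f (2 * x) := hf (hx.trans hxy) h2x hy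
        _ ≤ 2 ^ θ * f x := hD x hx
        _ ≤ 2 ^ θ * (y / x) ^ θ * f x := by
          rw [mul_assoc]; gcongr; exact le_mul_of_one_le_left hfx hyx
    · have hy0 : 0 < y := by linarith
      have hm' : y / (2 * x) < 2 ^ m := by
        rw [div_lt_iff₀ (by positivity)] at hm ⊢; rw [pow_succ] at hm; linarith
      calc f y ≤ 2 ^ θ * (y / (2 * x)) ^ θ * f (2 * x) := ih h2x hy.le hm'
        _ ≤ 2 ^ θ * (y / (2 * x)) ^ θ * (2 ^ θ * f x) :=
          mul_le_mul_of_nonneg_left (hD x hx) (by positivity)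
        _ = 2 ^ θ * (y / x) ^ θ * f x := by
          rw [mul_comm 2 x, ← div_div, div_rpow (by positivity) zero_le_two]
          field_simp

theorem integral_mul_exp_neg_mul_Ioc (c : ℝ) {s : ℝ} (hs : 0 ≤ s) :
    ∫ u in Ioc 0 s, c * exp (-(c * u)) = 1 - exp (-(c * s)) := by
  rw [← intervalIntegral.integral_of_le hs,
    intervalIntegral.integral_eq_sub_of_hasDerivAt (f := fun u => -exp (-(c * u)))]
  · simp only [mul_zero, neg_zero, exp_zero, sub_neg_eq_add]
    ring
  · intro u _
    have h := (((hasDerivAt_id u).const_mul c).neg.exp).neg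
    simp only [id, mul_one] at h
    exact h.congr_deriv (by simp [mul_comm])
  · exact (by fun_prop : Continuous fun u => c * exp (-(c * u))).intervalIntegrable _ _

theorem integral_mul_exp_neg_mul_mul_rpow_neg {c θ : ℝ} (hc : 0 < c) (hθ : θ < 1) :
    ∫ u in Ioi 0, c * exp (-(c * u)) * u ^ (-θ) = c ^ θ * Gamma (1 - θ) := by
  have h := integral_rpow_mul_exp_neg_mul_Ioi (sub_pos.mpr hθ) hc
  simp only [sub_sub_cancel_left] at h
  calc ∫ u in Ioi 0, c * exp (-(c * u)) * u ^ (-θ)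
      = c * ∫ u in Ioi 0, u ^ (-θ) * exp (-(c * u)) := by
        rw [← integral_const_mul]; congr 1 with u; ring
    _ = c ^ θ * Gamma (1 - θ) := by
        rw [h, one_div, inv_rpow hc.le, rpow_sub hc, rpow_one]
        field_simp

theorem integrableOn_mul_exp_neg_mul_mul_rpow_neg {c θ : ℝ} (hc : 0 < c) (hθ : θ < 1) :
    IntegrableOn (fun u => c * exp (-(c * u)) * u ^ (-θ)) (Ioi 0) := by
  have h := (integrableOn_rpow_mul_exp_neg_mul_rpow (p := 1) (s := -θ) (by linarith) one_pos
    hc).const_mul c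
  refine IntegrableOn.congr_fun h (fun u _ => ?_) measurableSet_Ioi
  simp only [rpow_one, neg_mul]; ring

theorem Summable.one_sub_exp_neg {ι : Type*} {a : ι → ℝ} (ha0 : ∀ k, 0 ≤ a k) (ha : Summable a) :
    Summable fun k => 1 - exp (-a k) :=
  ha.of_nonneg_of_le (fun k => sub_nonneg.mpr (exp_le_one_iff.mpr (neg_nonpos.mpr (ha0 k))))
    (fun k => by linarith [one_sub_le_exp_neg (a k)])

section countingFunction

variable {p : ℕ → ℝ}

theorem finite_setOf_one_div_le (hp : Summable p) {x : ℝ} (hx : 0 < x) :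
    {i | p i ≥ 1 / x}.Finite := by
  have h : ∀ᶠ i in cofinite, p i < 1 / x :=
    hp.tendsto_cofinite_zero.eventually (gt_mem_nhds (by positivity))
  exact (eventually_cofinite.mp h).subset fun i hi => not_lt.mpr hi

theorem countingFunction_nonneg (p : ℕ → ℝ) : 0 ≤ countingFunction p :=
  fun _ => Nat.cast_nonneg _

theorem countingFunction_monotone (hp0 : ∀ k, 0 ≤ p k) (hp : Summable p) :
    Monotone (countingFunction p) := by
  intro x y hxy
  by_cases hx : 0 < x
  · unfold countingFunction
    exact_mod_cast ncard_le_ncard (fun i (hi : p i ≥ 1 / x) =>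
      (one_div_le_one_div_of_le hx hxy).trans hi) (finite_setOf_one_div_le hp (hx.trans_le hxy))
  · -- for `x ≤ 0` every index is counted, and `ncard` of an infinite set is `0`
    have hinf : {i | p i ≥ 1 / x}.Infinite := infinite_univ.mono fun i _ =>
      (one_div_nonpos.mpr (not_lt.mp hx)).trans (hp0 i)
    simp only [countingFunction, hinf.ncard, Nat.cast_zero]
    exact countingFunction_nonneg p y

theorem tsum_one_sub_exp_neg_eq_integral (hp0 : ∀ k, 0 ≤ p k) (hp : Summable p) {c x : ℝ}
    (hc : 0 ≤ c) (hx : 0 < x) :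
    ∑' k, (1 - exp (-(c * (x * p k)))) =
      ∫ u in Ioi 0, c * exp (-(c * u)) * countingFunction p (x / u) := by
  set g : ℝ → ℝ := fun u => c * exp (-(c * u))
  set F : ℕ → ℝ → ℝ := fun k => (Ioc 0 (x * p k)).indicator g
  have hF_integral (k : ℕ) : ∫ u in Ioi 0, F k u = 1 - exp (-(c * (x * p k))) := by
    rw [integral_indicator measurableSet_Ioc, Measure.restrict_restrict measurableSet_Ioc,
      inter_eq_left.mpr Ioc_subset_Ioi_self,
      integral_mul_exp_neg_mul_Ioc c (mul_nonneg hx.le (hp0 k))]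
  have hF_nonneg (k : ℕ) (u : ℝ) : 0 ≤ F k u := indicator_nonneg (fun u _ => by positivity) u
  have hF_integrable (k : ℕ) : IntegrableOn (F k) (Ioi 0) :=
    ((by fun_prop : Continuous g).integrableOn_Ioc.integrable_indicator
      measurableSet_Ioc).integrableOn
  have hF_summable : Summable fun k => ∫ u in Ioi 0, ‖F k u‖ := by
    simp_rw [norm_of_nonneg (hF_nonneg _ _), hF_integral]
    exact Summable.one_sub_exp_neg (fun k => by have := hp0 k; positivity)
      ((hp.mul_left (c * x)).congr fun k => by ring)
  have hF_tsum (u : ℝ) (hu : u ∈ Ioi 0) : ∑' k, F k u = g u * countingFunction p (x / u) := by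
    have hS := (finite_setOf_one_div_le hp (div_pos hx hu)).to_subtype
    have hF (k : ℕ) : F k u = {k | p k ≥ 1 / (x / u)}.indicator (fun _ => g u) k := by
      simp only [F, indicator, mem_Ioc, mem_ofPred_eq, one_div_div, ge_iff_le, div_le_iff₀' hx,
        mem_Ioi.mp hu, true_and]
    rw [tsum_congr hF, ← tsum_subtype, tsum_const, Nat.card_coe_set_eq, nsmul_eq_mul, mul_comm,
      countingFunction]
  calc ∑' k, (1 - exp (-(c * (x * p k)))) = ∑' k, ∫ u in Ioi 0, F k u :=
        tsum_congr fun k => (hF_integral k).symm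
    _ = ∫ u in Ioi 0, ∑' k, F k u :=
        integral_tsum_of_summable_integral_norm hF_integrable hF_summable
    _ = _ := setIntegral_congr_fun measurableSet_Ioi hF_tsum

end countingFunction

theorem tendsto_integral_mul_exp_neg_mul_mul_div {f : ℝ → ℝ} {θ c : ℝ} (hf : Monotone f)
    (hf0 : 0 ≤ f) (hreg : IsRegularlyVarying f θ) (hθ0 : 0 ≤ θ) (hθ1 : θ < 1) (hc : 0 < c) :
    Tendsto (fun x => ∫ u in Ioi 0, c * exp (-(c * u)) * (f (x / u) / f x)) atTop
      (𝓝 (c ^ θ * Gamma (1 - θ))) := by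
  obtain ⟨θ', hθθ', hθ'1⟩ : ∃ θ', θ < θ' ∧ θ' < 1 := ⟨(1 + θ) / 2, by linarith, by linarith⟩
  have hpos : ∀ᶠ x in atTop, 0 < f x :=
    hreg.eventually_ne_zero.mono fun x hx => (hf0 x).lt_of_ne' hx
  obtain ⟨X, hX⟩ := ((hpos.and (hreg.eventually_le_rpow_mul hpos one_lt_two
    hθθ')).and (eventually_gt_atTop 0)).exists_forall_of_atTop
  have hratio (x : ℝ) (hx : X ≤ x) (u : ℝ) (hu : 0 < u) :
      f (x / u) / f x ≤ 1 + 2 ^ θ' * u ^ (-θ') := by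
    obtain ⟨⟨hfx, -⟩, hx0⟩ := hX x hx
    have hpow : 0 < 2 ^ θ' * u ^ (-θ') := by positivity
    rw [div_le_iff₀ hfx]
    rcases le_or_gt 1 u with hu1 | hu1
    · nlinarith [hf (div_le_self hx0.le hu1)]
    · have := le_rpow_mul_of_doubling (by linarith) (hX X le_rfl).2 (hf.monotoneOn _)
        (fun x _ => hf0 x) (fun x hx => (hX x hx).1.2) hx (le_div_self hx0.le hu hu1.le)
      rw [div_div_cancel_left' hx0.ne', inv_rpow hu.le, ← rpow_neg hu.le] at this
      nlinarith
  have hmeas : ∀ᶠ x in atTop, AEStronglyMeasurable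
      (fun u => c * exp (-(c * u)) * (f (x / u) / f x)) (volume.restrict (Ioi 0)) :=
    Eventually.of_forall fun x => (Measurable.mul (by fun_prop)
      ((hf.measurable.comp (measurable_const.div measurable_id)).div_const _)).aestronglyMeasurable
  have hbound : ∀ᶠ x in atTop, ∀ᵐ u ∂(volume.restrict (Ioi 0)),
      ‖c * exp (-(c * u)) * (f (x / u) / f x)‖ ≤ c * exp (-(c * u)) * (1 + 2 ^ θ' * u ^ (-θ')) := by
    refine eventually_atTop.mpr ⟨X, fun x hx => (ae_restrict_iff' measurableSet_Ioi).mpr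
      (Eventually.of_forall fun u hu => ?_)⟩
    rw [norm_of_nonneg (mul_nonneg (by positivity) (div_nonneg (hf0 _) (hf0 _)))]
    exact mul_le_mul_of_nonneg_left (hratio x hx u hu) (by positivity)
  have hintegrable : Integrable (fun u => c * exp (-(c * u)) * (1 + 2 ^ θ' * u ^ (-θ')))
      (volume.restrict (Ioi 0)) := by
    have h := ((exp_neg_integrableOn_Ioi 0 hc).const_mul c).add
      ((integrableOn_mul_exp_neg_mul_mul_rpow_neg hc hθ'1).const_mul (2 ^ θ'))
    refine h.congr (Eventually.of_forall fun u => ?_)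
    simp only [Pi.add_apply, neg_mul]; ring
  have hlim : ∀ᵐ u ∂(volume.restrict (Ioi 0)), Tendsto (fun x => c * exp (-(c * u)) *
      (f (x / u) / f x)) atTop (𝓝 (c * exp (-(c * u)) * u ^ (-θ))) := by
    refine (ae_restrict_iff' measurableSet_Ioi).mpr (Eventually.of_forall fun u hu => ?_)
    have h := (hreg u⁻¹ (inv_pos.mpr hu)).const_mul (c * exp (-(c * u)))
    simpa only [← div_eq_inv_mul, inv_rpow (le_of_lt hu), ← rpow_neg (le_of_lt hu)] using h
  simpa only [integral_mul_exp_neg_mul_mul_rpow_neg hc hθ1] using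
    tendsto_integral_filter_of_dominated_convergence _ hmeas hbound hintegrable hlim

theorem tendsto_tsum_one_sub_exp_neg_div_countingFunction {p : ℕ → ℝ} {θ c : ℝ}
    (hp0 : ∀ k, 0 ≤ p k) (hp : Summable p) (hreg : IsRegularlyVarying (countingFunction p) θ)
    (hθ0 : 0 < θ) (hθ1 : θ < 1) (hc : 0 ≤ c) :
    Tendsto (fun x => 1 / countingFunction p x * ∑' k, (1 - exp (-(c * (x * p k))))) atTop
      (𝓝 (c ^ θ * Gamma (1 - θ))) := by
  rcases hc.eq_or_lt with rfl | hc
  · simp [zero_rpow hθ0.ne']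
  refine (tendsto_integral_mul_exp_neg_mul_mul_div (countingFunction_monotone hp0 hp)
    (countingFunction_nonneg p) hreg hθ0.le hθ1 hc).congr' ?_
  filter_upwards [eventually_gt_atTop 0] with x hx
  rw [tsum_one_sub_exp_neg_eq_integral hp0 hp hc.le hx, ← integral_const_mul]
  congr 1 with u
  ring

theorem limit_covariance_odd_occupancy_general
    (p : ℕ → ℝ) (hp_pos : ∀ k, 0 < p k)
    (hp_sum : ∑' k, p k = 1)
    (θ : ℝ) (hθ : θ ∈ Set.Ioo (0 : ℝ) 1)
    (L : ℝ → ℝ)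
    (hL : ∀ c > (0 : ℝ), Tendsto (fun x => L (c * x) / L x) atTop (𝓝 1))
    (hα : ∀ x > (0 : ℝ), ((Set.ncard {i : ℕ | p i ≥ 1 / x} : ℝ)) = x ^ θ * L x)
    (τ t : ℝ) (hτ : 0 < τ) (hτt : τ ≤ t) :
    Tendsto (fun n : ℕ =>
        (1 / ((Set.ncard {i : ℕ | p i ≥ 1 / (n : ℝ)} : ℝ))) * ((1 / 4) *
          ∑' k, (Real.exp (-(2 * p k * (n : ℝ) * (t - τ)))
            - Real.exp (-(2 * p k * (n : ℝ) * (t + τ))))))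
      atTop
      (𝓝 (Real.Gamma (1 - θ) * (2 : ℝ) ^ (θ - 2) * ((t + τ) ^ θ - (t - τ) ^ θ))) := by
  have hp0 (k : ℕ) : 0 ≤ p k := (hp_pos k).le
  have hp : Summable p := by
    by_contra h
    simp [tsum_eq_zero_of_not_summable h] at hp_sum
  have hlim (c : ℝ) (hc : 0 ≤ c) := (tendsto_tsum_one_sub_exp_neg_div_countingFunction hp0 hp
    (.of_eq_rpow_mul hL hα) hθ.1 hθ.2 hc).comp tendsto_natCast_atTop_atTop
  have hsummable (c : ℝ) (hc : 0 ≤ c) (n : ℕ) : Summable fun k => 1 - exp (-(c * (n * p k))) :=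
    Summable.one_sub_exp_neg (fun k => by have := hp0 k; positivity)
      ((hp.mul_left (c * n)).congr fun k => by ring)
  convert ((hlim (2 * (t + τ)) (by linarith)).sub (hlim (2 * (t - τ)) (by linarith))).const_mul
    (1 / 4) using 2 with n
  · simp only [Function.comp_apply, countingFunction]
    rw [← mul_sub, ← Summable.tsum_sub (hsummable _ (by linarith) n) (hsummable _ (by linarith) n),
      mul_left_comm]
    congr 2
    exact tsum_congr fun k => by ring_nf
  · rw [mul_rpow zero_le_two (by linarith), mul_rpow zero_le_two (by linarith),
      rpow_sub two_pos, rpow_two]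
    ring

/-- Limit covariance of the odd-occupancy process, `θ ∈ (0,1)`: for `0 < τ ≤ t`,
`(1/α(n)) (1/4) ∑_k (e^{−2p_k n(t−τ)} − e^{−2p_k n(t+τ)})
  → Γ(1−θ) 2^{θ−2} ((t+τ)^θ − (t−τ)^θ)`. -/
theorem limit_covariance_odd_occupancy
    (p : ℕ → ℝ) (hp_pos : ∀ k, 0 < p k) (hp_mono : Antitone p)
    (hp_sum : ∑' k, p k = 1)
    (θ : ℝ) (hθ : θ ∈ Set.Ioo (0 : ℝ) 1)
    (L : ℝ → ℝ)
    (hL : ∀ c > (0 : ℝ), Tendsto (fun x => L (c * x) / L x) atTop (𝓝 1))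
    (hα : ∀ x > (0 : ℝ), ((Set.ncard {i : ℕ | p i ≥ 1 / x} : ℝ)) = x ^ θ * L x)
    (τ t : ℝ) (hτ : 0 < τ) (hτt : τ ≤ t) :
    Tendsto (fun n : ℕ =>
        (1 / ((Set.ncard {i : ℕ | p i ≥ 1 / (n : ℝ)} : ℝ))) * ((1 / 4) *
          ∑' k, (Real.exp (-(2 * p k * (n : ℝ) * (t - τ)))
            - Real.exp (-(2 * p k * (n : ℝ) * (t + τ))))))
      atTop
      (𝓝 (Real.Gamma (1 - θ) * (2 : ℝ) ^ (θ - 2) * ((t + τ) ^ θ - (t - τ) ^ θ))) :=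
  limit_covariance_odd_occupancy_general p hp_pos hp_sum θ hθ L hL hα τ t hτ hτt
end

section
/- For all fixed reals 0 < τ ≤ t, lim_{n→∞} (1/α(n)) Σ_{k≥1} n² t τ p_k² e^{−n t p_k} (1 − e^{−n τ p_k}) = θ Γ(2 − θ) · ( τ t^{θ−1} − t τ (t + τ)^{θ−2} ), where Γ is the Gamma function. -/
open Filter Topology Real MeasureTheory Set

/-!
With `g_a(u) = u² e^{-au}` the summand is `t τ (g_t(n p_k) - g_{t+τ}(n p_k))`. Summing
`g_a(x_k) = ∫₀^{x_k} g_a'` over `k` gives `∑_k g_a(n p_k) = ∫₀^∞ g_a'(s) α(n/s) ds`.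
Regular variation gives `α(n/s) / α(n) → s^{-θ}`, and iterating the doubling bound
`α(2x) ≤ 2^κ α(x)` (any `κ > θ`, for large `x`) dominates `α(n/s) / α(n)` by
`2^κ max(1, s^{-κ})`. Dominated convergence then yields
`α(n)⁻¹ ∑_k g_a(n p_k) → ∫₀^∞ g_a'(s) s^{-θ} ds = θ Γ(2-θ) a^{θ-2}`.
-/

/-- Positivity of `A` is not required: the case `c = 1` forces `A x ≠ 0` for large `x`. -/
def RegularlyVarying (A : ℝ → ℝ) (θ : ℝ) : Prop :=
  ∀ c > (0 : ℝ), Tendsto (fun x => A (c * x) / A x) atTop (𝓝 (c ^ θ))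

namespace RegularlyVarying

variable {A : ℝ → ℝ} {θ : ℝ}

theorem of_eq_rpow_mul {L : ℝ → ℝ} (hA : ∀ x > (0 : ℝ), A x = x ^ θ * L x)
    (hL : ∀ c > (0 : ℝ), Tendsto (fun x => L (c * x) / L x) atTop (𝓝 1)) :
    RegularlyVarying A θ := by
  intro c hc
  have h := (hL c hc).const_mul (c ^ θ)
  rw [mul_one] at h
  refine h.congr' ?_
  filter_upwards [eventually_gt_atTop 0] with x hx
  rw [hA x hx, hA _ (mul_pos hc hx), mul_rpow hc.le hx.le, mul_assoc, mul_div_assoc,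
    mul_div_mul_left _ _ (rpow_pos_of_pos hx θ).ne']

theorem eventually_pos (hA : RegularlyVarying A θ) (hA0 : ∀ x, 0 ≤ A x) :
    ∀ᶠ x in atTop, 0 < A x := by
  have h1 := hA 1 one_pos
  simp only [one_mul, one_rpow] at h1
  filter_upwards [h1.eventually_ne one_ne_zero] with x hx
  exact (hA0 x).lt_of_ne fun h => hx (by simp [← h])

theorem exists_doubling (hA : RegularlyVarying A θ) (hA0 : ∀ x, 0 ≤ A x) {κ : ℝ} (hθκ : θ < κ) :
    ∃ X₀ > 0, ∀ x ≥ X₀, A (2 * x) ≤ 2 ^ κ * A x := by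
  have hlt : (2 : ℝ) ^ θ < 2 ^ κ := rpow_lt_rpow_of_exponent_lt one_lt_two hθκ
  obtain ⟨N, hN⟩ := (((hA 2 two_pos).eventually_lt_const hlt).and
    ((hA.eventually_pos hA0).and (eventually_gt_atTop 0))).exists_forall_of_atTop
  refine ⟨max N 1, by positivity, fun x hx => ?_⟩
  obtain ⟨hratio, hpos, -⟩ := hN x (le_of_max_le_left hx)
  exact ((div_lt_iff₀ hpos).mp hratio).le

end RegularlyVarying

theorem le_mul_max_rpow_of_doubling {A : ℝ → ℝ} (hmono : MonotoneOn A (Ioi 0)) {X₀ κ : ℝ}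
    (hX₀ : 0 < X₀) (hκ : 0 ≤ κ) (hA0 : ∀ x ≥ X₀, 0 ≤ A x)
    (hdb : ∀ x ≥ X₀, A (2 * x) ≤ 2 ^ κ * A x) {x u : ℝ} (hx : X₀ ≤ x) (hu : 0 < u) :
    A (u * x) ≤ 2 ^ κ * max 1 (u ^ κ) * A x := by
  have hle_two : ∀ x ≥ X₀, ∀ u, 0 < u → u ≤ 2 → A (u * x) ≤ 2 ^ κ * max 1 (u ^ κ) * A x := by
    intro x hx u hu hu2
    have hx0 : 0 < x := hX₀.trans_le hx
    calc A (u * x) ≤ A (2 * x) :=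
          hmono (mul_pos hu hx0) (mul_pos two_pos hx0) (by gcongr)
      _ ≤ 2 ^ κ * A x := hdb x hx
      _ ≤ 2 ^ κ * max 1 (u ^ κ) * A x := mul_le_mul_of_nonneg_right
          (le_mul_of_one_le_right (by positivity) (le_max_left _ _)) (hA0 x hx)
  -- Induct on `j` with `u < 2 ^ j`, trading `(u, x)` for `(u / 2, 2 * x)`.
  obtain ⟨j, hj⟩ := pow_unbounded_of_one_lt u one_lt_two
  induction j generalizing x u with
  | zero => exact hle_two x hx u hu (by linarith [pow_zero (2 : ℝ)])
  | succ j ih =>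
    rcases le_or_gt u 2 with hu2 | hu2
    · exact hle_two x hx u hu hu2
    have hx2 : X₀ ≤ 2 * x := by linarith [hX₀.trans_le hx]
    have hu1 : 1 ≤ u / 2 := by rw [le_div_iff₀ two_pos]; linarith
    have key := ih (x := 2 * x) (u := u / 2) hx2 (by positivity) (by rw [pow_succ] at hj; linarith)
    rw [max_eq_right (one_le_rpow hu1 hκ)] at key
    calc A (u * x) = A (u / 2 * (2 * x)) := by ring_nf
      _ ≤ 2 ^ κ * (u / 2) ^ κ * A (2 * x) := key
      _ ≤ 2 ^ κ * (u / 2) ^ κ * (2 ^ κ * A x) := by gcongr; exact hdb x hx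
      _ = 2 ^ κ * u ^ κ * A x := by
          rw [div_rpow hu.le zero_le_two]; field_simp
      _ ≤ 2 ^ κ * max 1 (u ^ κ) * A x := by gcongr; exacts [hA0 x hx, le_max_right _ _]

theorem RegularlyVarying.tendsto_integral_mul_div {A : ℝ → ℝ} {θ κ : ℝ}
    (hA : RegularlyVarying A θ) (hmono : MonotoneOn A (Ioi 0)) (hA0 : ∀ x, 0 ≤ A x)
    (hθκ : θ < κ) (hκ : 0 ≤ κ) {f : ℝ → ℝ} (hf : IntegrableOn f (Ioi 0))
    (hfκ : IntegrableOn (fun s => f s * s ^ (-κ)) (Ioi 0)) :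
    Tendsto (fun x => (∫ s in Ioi 0, f s * A (x / s)) / A x) atTop
      (𝓝 (∫ s in Ioi 0, f s * s ^ (-θ))) := by
  obtain ⟨X₀, hX₀, hdb⟩ := hA.exists_doubling hA0 hθκ
  simp_rw [← integral_div]
  refine tendsto_integral_filter_of_dominated_convergence
    (fun s => 2 ^ κ * (‖f s‖ + ‖f s * s ^ (-κ)‖)) ?_ ?_
    ((hf.norm.add hfκ.norm).const_mul _) ?_
  · filter_upwards [eventually_gt_atTop 0] with x hx
    have hanti : AntitoneOn (fun s => A (x / s)) (Ioi 0) := fun s hs s' hs' hss' =>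
      hmono (div_pos hx hs') (div_pos hx hs) (div_le_div_of_nonneg_left hx.le hs hss')
    exact AEStronglyMeasurable.mul_const (hf.aestronglyMeasurable.mul
      (aemeasurable_restrict_of_antitoneOn measurableSet_Ioi hanti).aestronglyMeasurable) (A x)⁻¹
  · filter_upwards [eventually_ge_atTop X₀, hA.eventually_pos hA0] with x hx hAx
    refine (ae_restrict_iff' measurableSet_Ioi).mpr (ae_of_all _ fun s (hs : 0 < s) => ?_)
    have hpotter :=
      le_mul_max_rpow_of_doubling hmono hX₀ hκ (fun y _ => hA0 y) hdb hx (inv_pos.mpr hs)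
    rw [← div_eq_inv_mul, inv_rpow hs.le, ← rpow_neg hs.le] at hpotter
    rw [norm_div, norm_mul, norm_mul, Real.norm_of_nonneg (hA0 _), Real.norm_of_nonneg hAx.le,
      Real.norm_of_nonneg (rpow_nonneg hs.le _), div_le_iff₀ hAx]
    calc ‖f s‖ * A (x / s) ≤ ‖f s‖ * (2 ^ κ * max 1 (s ^ (-κ)) * A x) := by gcongr
      _ ≤ ‖f s‖ * (2 ^ κ * (1 + s ^ (-κ)) * A x) := by
          gcongr; exact max_le_add_of_nonneg zero_le_one (rpow_nonneg hs.le _)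
      _ = 2 ^ κ * (‖f s‖ + ‖f s‖ * s ^ (-κ)) * A x := by ring
  · refine (ae_restrict_iff' measurableSet_Ioi).mpr (ae_of_all _ fun s (hs : 0 < s) => ?_)
    have h := ((hA s⁻¹ (inv_pos.mpr hs)).const_mul (f s))
    rw [inv_rpow hs.le, ← rpow_neg hs.le] at h
    refine h.congr fun x => ?_
    rw [← div_eq_inv_mul, mul_div_assoc]

theorem Summable.finite_setOf_le {x : ℕ → ℝ} (hx : Summable x) {ε : ℝ} (hε : 0 < ε) :
    {k | ε ≤ x k}.Finite := by
  simpa using Filter.eventually_cofinite.mp (hx.tendsto_cofinite_zero.eventually (gt_mem_nhds hε))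

theorem tsum_indicator_const_of_finite {S : Set ℕ} (hS : S.Finite) (c : ℝ) :
    ∑' k, S.indicator (fun _ => c) k = S.ncard * c := by
  rw [tsum_eq_sum (s := hS.toFinset) (fun k hk => indicator_of_notMem (by simpa using hk) _),
    Finset.sum_congr rfl (fun k hk => indicator_of_mem (hS.mem_toFinset.mp hk) _),
    Finset.sum_const, nsmul_eq_mul, ncard_eq_toFinset_card S hS]

theorem hasSum_integral_deriv_mul_ncard {g g' : ℝ → ℝ} (hg : ∀ s, HasDerivAt g (g' s) s)
    (hg' : Continuous g') (hg0 : g 0 = 0) {x : ℕ → ℝ} (hx0 : ∀ k, 0 ≤ x k) (hx : Summable x) :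
    HasSum (fun k => g (x k)) (∫ s in Ioi 0, g' s * {k | s ≤ x k}.ncard) := by
  set F : ℕ → ℝ → ℝ := fun k => (Ioc 0 (x k)).indicator g'
  have hF : ∀ k, ∫ s, F k s = g (x k) := fun k => by
    rw [integral_indicator measurableSet_Ioc, ← intervalIntegral.integral_of_le (hx0 k),
      intervalIntegral.integral_eq_sub_of_hasDerivAt (fun s _ => hg s) (hg'.intervalIntegrable _ _),
      hg0, sub_zero]
  obtain ⟨C, hC⟩ := isCompact_Icc.exists_bound_of_continuousOn (s := Icc 0 (∑' k, x k))
    hg'.continuousOn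
  have hFnorm : ∀ k, ∫ s, ‖F k s‖ ≤ C * x k := fun k => by
    simp_rw [F, norm_indicator_eq_indicator_norm]
    rw [integral_indicator measurableSet_Ioc]
    refine (Real.le_norm_self _).trans ((norm_setIntegral_le_of_norm_le_const (C := C)
      measure_Ioc_lt_top fun s hs => ?_).trans_eq ?_)
    · rw [norm_norm]
      exact hC s ⟨hs.1.le, hs.2.trans (hx.le_tsum k fun j _ => hx0 j)⟩
    · rw [Real.volume_real_Ioc_of_le (hx0 k), sub_zero]
  have hvalue : ∫ s, ∑' k, F k s = ∫ s in Ioi 0, g' s * {k | s ≤ x k}.ncard := by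
    rw [← setIntegral_eq_integral_of_forall_compl_eq_zero fun s (hs : ¬ 0 < s) => by simp [F, hs]]
    refine setIntegral_congr_fun measurableSet_Ioi fun s (hs : 0 < s) => ?_
    have hFs : (fun k => F k s) = {k | s ≤ x k}.indicator (fun _ => g' s) := funext fun k => by
      simp [F, indicator_apply, hs]
    rw [hFs, tsum_indicator_const_of_finite (hx.finite_setOf_le hs), mul_comm]
  rw [← hvalue]
  simpa only [hF] using hasSum_integral_of_summable_integral_norm (F := F)
    (fun k => (integrable_indicator_iff measurableSet_Ioc).mpr hg'.integrableOn_Ioc)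
    (Summable.of_nonneg_of_le (fun k => integral_nonneg fun s => norm_nonneg _) hFnorm
      (hx.mul_left C))

section SquareTimesExp

variable {a : ℝ}

theorem hasDerivAt_sq_mul_exp_neg_mul (a s : ℝ) :
    HasDerivAt (fun u => u ^ 2 * exp (-(a * u))) ((2 * s - a * s ^ 2) * exp (-(a * s))) s := by
  refine ((hasDerivAt_pow 2 s).mul ((hasDerivAt_id s).const_mul a).neg.exp).congr_deriv ?_
  simp only [id, Nat.cast_ofNat, mul_one, Pi.neg_apply]
  ring

theorem integrableOn_rpow_sub_one_mul_exp_neg_mul (ha : 0 < a) {q : ℝ} (hq : 0 < q) :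
    IntegrableOn (fun s => s ^ (q - 1) * exp (-(a * s))) (Ioi 0) := by
  simpa using integrableOn_rpow_mul_exp_neg_mul_rpow (p := 1) (by linarith) one_pos ha

theorem eqOn_deriv_sq_mul_exp_mul_rpow (a r : ℝ) :
    EqOn (fun s => (2 * s - a * s ^ 2) * exp (-(a * s)) * s ^ (-r))
      (fun s => 2 * (s ^ ((2 - r) - 1) * exp (-(a * s)))
        - a * (s ^ ((3 - r) - 1) * exp (-(a * s)))) (Ioi 0) := fun s (hs : 0 < s) => by
  simp only
  rw [show (2 - r) - 1 = 1 + -r by ring, show (3 - r) - 1 = 2 + -r by ring,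
    rpow_add hs, rpow_add hs, rpow_one, rpow_two]
  ring

theorem integrableOn_deriv_sq_mul_exp_mul_rpow (ha : 0 < a) {r : ℝ} (hr : r < 2) :
    IntegrableOn (fun s => (2 * s - a * s ^ 2) * exp (-(a * s)) * s ^ (-r)) (Ioi 0) :=
  IntegrableOn.congr_fun
    (((integrableOn_rpow_sub_one_mul_exp_neg_mul ha (by linarith)).const_mul 2).sub
      ((integrableOn_rpow_sub_one_mul_exp_neg_mul ha (by linarith)).const_mul a))
    (eqOn_deriv_sq_mul_exp_mul_rpow a r).symm measurableSet_Ioi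

theorem integral_deriv_sq_mul_exp_mul_rpow (ha : 0 < a) {r : ℝ} (hr : r < 2) :
    ∫ s in Ioi 0, (2 * s - a * s ^ 2) * exp (-(a * s)) * s ^ (-r) =
      r * Gamma (2 - r) * a ^ (r - 2) := by
  have h2r : 0 < 2 - r := by linarith
  rw [setIntegral_congr_fun measurableSet_Ioi (eqOn_deriv_sq_mul_exp_mul_rpow a r),
    integral_sub ((integrableOn_rpow_sub_one_mul_exp_neg_mul ha h2r).const_mul 2)
      ((integrableOn_rpow_sub_one_mul_exp_neg_mul ha (by linarith)).const_mul a),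
    integral_const_mul, integral_const_mul, integral_rpow_mul_exp_neg_mul_Ioi h2r ha,
    integral_rpow_mul_exp_neg_mul_Ioi (by linarith) ha, show 3 - r = (2 - r) + 1 by ring,
    Gamma_add_one h2r.ne', one_div, inv_rpow ha.le, inv_rpow ha.le, ← rpow_neg ha.le,
    ← rpow_neg ha.le, show -(2 - r + 1) = (r - 2) + -1 by ring, neg_sub, rpow_add ha,
    rpow_neg_one]
  field_simp
  ring

end SquareTimesExp

noncomputable def countingFn (p : ℕ → ℝ) (x : ℝ) : ℝ := ({i | p i ≥ 1 / x}.ncard : ℝ)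

section CountingFn

variable {p : ℕ → ℝ}

theorem countingFn_nonneg (p : ℕ → ℝ) (x : ℝ) : 0 ≤ countingFn p x := Nat.cast_nonneg _

theorem monotoneOn_countingFn (hp : Summable p) : MonotoneOn (countingFn p) (Ioi 0) :=
  fun x (hx : 0 < x) y (hy : 0 < y) hxy => Nat.cast_le.mpr <|
    ncard_le_ncard (fun _ hi => (one_div_le_one_div_of_le hx hxy).trans hi)
      (hp.finite_setOf_le (one_div_pos.mpr hy))

theorem countingFn_div {n : ℝ} (hn : 0 < n) (s : ℝ) :
    countingFn p (n / s) = {k | s ≤ n * p k}.ncard := by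
  unfold countingFn
  congr 3 with k
  rw [one_div_div, ge_iff_le, div_le_iff₀' hn]

theorem hasSum_sq_mul_exp_eq_integral_countingFn (hp0 : ∀ k, 0 ≤ p k) (hp : Summable p) (a : ℝ)
    {n : ℝ} (hn : 0 < n) :
    HasSum (fun k => (n * p k) ^ 2 * exp (-(a * (n * p k))))
      (∫ s in Ioi 0, (2 * s - a * s ^ 2) * exp (-(a * s)) * countingFn p (n / s)) := by
  rw [setIntegral_congr_fun measurableSet_Ioi fun s (hs : 0 < s) => by
    rw [countingFn_div hn s]]
  exact hasSum_integral_deriv_mul_ncard (hasDerivAt_sq_mul_exp_neg_mul a) (by fun_prop)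
    (by simp) (fun k => mul_nonneg hn.le (hp0 k)) (hp.mul_left n)

theorem tendsto_tsum_sq_mul_exp_div_countingFn (hp0 : ∀ k, 0 ≤ p k) (hp : Summable p) {θ : ℝ}
    (hθ : θ < 1) (hA : RegularlyVarying (countingFn p) θ) {a : ℝ} (ha : 0 < a) :
    Tendsto (fun n : ℕ => 1 / countingFn p n * ∑' k, (n * p k) ^ 2 * exp (-(a * (n * p k))))
      atTop (𝓝 (θ * Gamma (2 - θ) * a ^ (θ - 2))) := by
  have hlim := (hA.tendsto_integral_mul_div (monotoneOn_countingFn hp) (countingFn_nonneg p) hθ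
    zero_le_one (by simpa using integrableOn_deriv_sq_mul_exp_mul_rpow ha (r := 0) two_pos)
    (integrableOn_deriv_sq_mul_exp_mul_rpow ha one_lt_two)).comp tendsto_natCast_atTop_atTop
  rw [integral_deriv_sq_mul_exp_mul_rpow ha (hθ.trans one_lt_two)] at hlim
  refine hlim.congr' ?_
  filter_upwards [eventually_gt_atTop 0] with n hn
  rw [(hasSum_sq_mul_exp_eq_integral_countingFn hp0 hp a (Nat.cast_pos.mpr hn)).tsum_eq,
    one_div_mul_eq_div, Function.comp_apply]

end CountingFn

theorem limit_covariance_missing_mass_general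
    (p : ℕ → ℝ) (hp_pos : ∀ k, 0 < p k)
    (hp_sum : ∑' k, p k = 1)
    (θ : ℝ) (hθ : θ ∈ Set.Ioo (0 : ℝ) 1)
    (L : ℝ → ℝ)
    (hL : ∀ c > (0 : ℝ), Tendsto (fun x => L (c * x) / L x) atTop (𝓝 1))
    (hα : ∀ x > (0 : ℝ), ((Set.ncard {i : ℕ | p i ≥ 1 / x} : ℝ)) = x ^ θ * L x)
    (τ t : ℝ) (hτ : 0 < τ) (hτt : τ ≤ t) :
    Tendsto (fun n : ℕ =>
        (1 / ((Set.ncard {i : ℕ | p i ≥ 1 / (n : ℝ)} : ℝ))) *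
          ∑' k, (n : ℝ) ^ 2 * t * τ * (p k) ^ 2 * Real.exp (-((n : ℝ) * t * p k))
            * (1 - Real.exp (-((n : ℝ) * τ * p k))))
      atTop
      (𝓝 (θ * Real.Gamma (2 - θ)
        * (τ * t ^ (θ - 1) - t * τ * (t + τ) ^ (θ - 2)))) := by
  have hp : Summable p := by
    by_contra h
    simp [tsum_eq_zero_of_not_summable h] at hp_sum
  have hp0 : ∀ k, 0 ≤ p k := fun k => (hp_pos k).le
  have ht : 0 < t := hτ.trans_le hτt
  have hA : RegularlyVarying (countingFn p) θ := .of_eq_rpow_mul hα hL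
  have hlim := ((tendsto_tsum_sq_mul_exp_div_countingFn hp0 hp hθ.2 hA ht).sub
    (tendsto_tsum_sq_mul_exp_div_countingFn hp0 hp hθ.2 hA (add_pos ht hτ))).const_mul (t * τ)
  have hval : t * τ * (θ * Gamma (2 - θ) * t ^ (θ - 2) - θ * Gamma (2 - θ) * (t + τ) ^ (θ - 2))
      = θ * Gamma (2 - θ) * (τ * t ^ (θ - 1) - t * τ * (t + τ) ^ (θ - 2)) := by
    rw [show θ - 1 = 1 + (θ - 2) by ring, rpow_add ht, rpow_one]
    ring
  rw [hval] at hlim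
  refine hlim.congr' ?_
  filter_upwards [eventually_gt_atTop 0] with n hn
  have hn' : (0 : ℝ) < n := Nat.cast_pos.mpr hn
  have hsummand : ∀ k, (n : ℝ) ^ 2 * t * τ * p k ^ 2 * exp (-(n * t * p k))
      * (1 - exp (-(n * τ * p k))) = t * τ * ((n * p k) ^ 2 * exp (-(t * (n * p k)))
        - (n * p k) ^ 2 * exp (-((t + τ) * (n * p k)))) := fun k => by
    rw [show -((t + τ) * (n * p k)) = -(n * t * p k) + -(n * τ * p k) by ring, exp_add,
      show -(t * (n * p k)) = -(n * t * p k) by ring]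
    ring
  rw [tsum_congr hsummand, tsum_mul_left, Summable.tsum_sub
    (hasSum_sq_mul_exp_eq_integral_countingFn hp0 hp t hn').summable
    (hasSum_sq_mul_exp_eq_integral_countingFn hp0 hp (t + τ) hn').summable]
  simp only [countingFn]
  ring

/-- Limit covariance of the scaled missing mass process, `θ ∈ (0,1)`: for `0 < τ ≤ t`,
`(1/α(n)) ∑_k n² t τ p_k² e^{−n t p_k}(1 − e^{−n τ p_k})
  → θ Γ(2−θ) (τ t^{θ−1} − t τ (t+τ)^{θ−2})`. -/
theorem limit_covariance_missing_mass
    (p : ℕ → ℝ) (hp_pos : ∀ k, 0 < p k) (hp_mono : Antitone p)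
    (hp_sum : ∑' k, p k = 1)
    (θ : ℝ) (hθ : θ ∈ Set.Ioo (0 : ℝ) 1)
    (L : ℝ → ℝ)
    (hL : ∀ c > (0 : ℝ), Tendsto (fun x => L (c * x) / L x) atTop (𝓝 1))
    (hα : ∀ x > (0 : ℝ), ((Set.ncard {i : ℕ | p i ≥ 1 / x} : ℝ)) = x ^ θ * L x)
    (τ t : ℝ) (hτ : 0 < τ) (hτt : τ ≤ t) :
    Tendsto (fun n : ℕ =>
        (1 / ((Set.ncard {i : ℕ | p i ≥ 1 / (n : ℝ)} : ℝ))) *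
          ∑' k, (n : ℝ) ^ 2 * t * τ * (p k) ^ 2 * Real.exp (-((n : ℝ) * t * p k))
            * (1 - Real.exp (-((n : ℝ) * τ * p k))))
      atTop
      (𝓝 (θ * Real.Gamma (2 - θ)
        * (τ * t ^ (θ - 1) - t * τ * (t + τ) ^ (θ - 2)))) :=
  limit_covariance_missing_mass_general p hp_pos hp_sum θ hθ L hL hα τ t hτ hτt
end
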